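/- For each choice of sign ±: the set of g ∈ L²(ℝ) for which there exists c ∈ ℂ with (x ↦ x g(x) − c) ∈ L²(ℝ) and x g(x) − c = ±i·g(x) for almost every x ∈ ℝ is exactly the set of scalar multiples of the function x ↦ (x ∓ i)^{−1}; moreover, for g(x) = c₀·(x ∓ i)^{−1} the associated constant is c = c₀. In particular each of these two deficiency sets is a one-dimensional subspace of L²(ℝ). -/

import Mathlib

/-!
If `x g(x) - c = z g(x)` almost everywhere, then `(x - z) g(x) = c`, and `x - z` never vanishes for
non-real `z`, so `g = c (x - z)⁻¹`. Conversely `c (x - z)⁻¹` satisfies the relation pointwise and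
lies in `L²(ℝ)`, since `|x - z|⁻²` is a translated and rescaled copy of `(1 + x²)⁻¹`. With
`z = ±i` this gives the theorem.
-/

open MeasureTheory

namespace Complex

variable {z : ℂ}

theorem ofReal_sub_ne_zero_of_im_ne_zero (hz : z.im ≠ 0) (x : ℝ) : (x : ℂ) - z ≠ 0 :=
  fun h => hz (by simpa using congrArg im h)

theorem ofReal_mul_mul_inv_sub_sub (hz : z.im ≠ 0) (c : ℂ) (x : ℝ) :
    (x : ℂ) * (c * ((x : ℂ) - z)⁻¹) - c = z * (c * ((x : ℂ) - z)⁻¹) := by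
  field_simp [ofReal_sub_ne_zero_of_im_ne_zero hz x]
  ring

theorem sq_norm_inv_ofReal_sub (hz : z.im ≠ 0) (x : ℝ) :
    ‖((x : ℂ) - z)⁻¹‖ ^ 2 = (z.im ^ 2)⁻¹ * (1 + ((x - z.re) / z.im) ^ 2)⁻¹ := by
  rw [norm_inv, inv_pow, Complex.sq_norm, ← mul_inv, normSq_apply]
  congr 1
  field_simp
  simp only [sub_re, ofReal_re, sub_im, ofReal_im]
  ring

theorem memLp_two_inv_ofReal_sub (hz : z.im ≠ 0) :
    MemLp (fun x : ℝ => ((x : ℂ) - z)⁻¹) 2 volume := by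
  have hcont : Continuous fun x : ℝ => ((x : ℂ) - z)⁻¹ :=
    (continuous_ofReal.sub continuous_const).inv₀ (ofReal_sub_ne_zero_of_im_ne_zero hz)
  rw [memLp_two_iff_integrable_sq_norm hcont.aestronglyMeasurable]
  simp_rw [sq_norm_inv_ofReal_sub hz]
  exact ((integrable_inv_one_add_sq.comp_div hz).comp_sub_right z.re).const_mul _

theorem memLp_two_ofReal_mul_mul_inv_sub_sub (hz : z.im ≠ 0) (c : ℂ) :
    MemLp (fun x : ℝ => (x : ℂ) * (c * ((x : ℂ) - z)⁻¹) - c) 2 volume := by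
  simp_rw [ofReal_mul_mul_inv_sub_sub hz]
  exact ((memLp_two_inv_ofReal_sub hz).const_mul c).const_mul z

end Complex

open Complex

def deficiencySet (z : ℂ) : Set (Lp ℂ 2 (volume : Measure ℝ)) :=
  {g | ∃ c : ℂ, MemLp (fun x : ℝ => (x : ℂ) * g x - c) 2 volume ∧
    ∀ᵐ x : ℝ, (x : ℂ) * g x - c = z * g x}

noncomputable def cauchyKernelLp {z : ℂ} (hz : z.im ≠ 0) : Lp ℂ 2 (volume : Measure ℝ) :=
  (memLp_two_inv_ofReal_sub hz).toLp _

section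

variable {z : ℂ}

theorem coeFn_cauchyKernelLp (hz : z.im ≠ 0) :
    (cauchyKernelLp hz : ℝ → ℂ) =ᵐ[volume] fun x : ℝ => ((x : ℂ) - z)⁻¹ :=
  MemLp.coeFn_toLp _

theorem mem_deficiencySet_iff (hz : z.im ≠ 0) (g : Lp ℂ 2 (volume : Measure ℝ)) :
    g ∈ deficiencySet z ↔ ∃ c₀ : ℂ, (g : ℝ → ℂ) =ᵐ[volume] fun x : ℝ => c₀ * ((x : ℂ) - z)⁻¹ := by
  constructor
  · rintro ⟨c, -, hg⟩
    refine ⟨c, hg.mono fun x hx => ?_⟩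
    rw [eq_mul_inv_iff_mul_eq₀ (ofReal_sub_ne_zero_of_im_ne_zero hz x)]
    linear_combination hx
  · rintro ⟨c₀, hg⟩
    have hrel : (fun x : ℝ => (x : ℂ) * g x - c₀) =ᵐ[volume] fun x => z * g x :=
      hg.mono fun x hx => by simp only [hx]; exact ofReal_mul_mul_inv_sub_sub hz c₀ x
    exact ⟨c₀, ((Lp.memLp g).const_mul z).ae_eq hrel.symm, hrel⟩

theorem cauchyKernelLp_ne_zero (hz : z.im ≠ 0) : cauchyKernelLp hz ≠ 0 := by
  intro h
  have hzero : (fun x : ℝ => ((x : ℂ) - z)⁻¹) =ᵐ[volume] 0 := by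
    refine (coeFn_cauchyKernelLp hz).symm.trans ?_
    rw [h]
    exact Lp.coeFn_zero _ _ _
  obtain ⟨x, hx⟩ := hzero.exists
  exact inv_ne_zero (ofReal_sub_ne_zero_of_im_ne_zero hz x) hx

theorem smul_cauchyKernelLp_eq_iff (hz : z.im ≠ 0) (a : ℂ) (g : Lp ℂ 2 (volume : Measure ℝ)) :
    a • cauchyKernelLp hz = g ↔ (g : ℝ → ℂ) =ᵐ[volume] fun x : ℝ => a * ((x : ℂ) - z)⁻¹ := by
  have hcoe : ((a • cauchyKernelLp hz : Lp ℂ 2 volume) : ℝ → ℂ) =ᵐ[volume]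
      fun x : ℝ => a * ((x : ℂ) - z)⁻¹ :=
    (Lp.coeFn_smul a _).trans <| (coeFn_cauchyKernelLp hz).mono fun x hx => by simp [hx]
  rw [Lp.ext_iff]
  exact ⟨fun h => h.symm.trans hcoe, fun h => hcoe.trans h.symm⟩

theorem deficiencySet_eq_range_smul (hz : z.im ≠ 0) :
    deficiencySet z = Set.range fun a : ℂ => a • cauchyKernelLp hz := by
  ext g
  simp only [mem_deficiencySet_iff hz, Set.mem_range, smul_cauchyKernelLp_eq_iff hz]

end

theorem stmt13 (s : ℝ) (hs : s = 1 ∨ s = -1) :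
    -- the deficiency set is exactly the set of scalar multiples of `x ↦ (x ∓ i)⁻¹`
    ({g : Lp ℂ 2 (volume : Measure ℝ) | ∃ c : ℂ,
        MemLp (fun x : ℝ => (x : ℂ) * g x - c) 2 (volume : Measure ℝ) ∧
        ∀ᵐ x : ℝ, (x : ℂ) * g x - c = (s : ℂ) * Complex.I * g x} =
      {g : Lp ℂ 2 (volume : Measure ℝ) | ∃ c₀ : ℂ,
        (g : ℝ → ℂ) =ᵐ[(volume : Measure ℝ)]
          fun x : ℝ => c₀ * ((x : ℂ) - (s : ℂ) * Complex.I)⁻¹}) ∧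
    -- for `g = c₀·(x ∓ i)⁻¹` the associated constant is `c = c₀`
    (∀ c₀ : ℂ,
      MemLp (fun x : ℝ => (x : ℂ) * (c₀ * ((x : ℂ) - (s : ℂ) * Complex.I)⁻¹) - c₀) 2
        (volume : Measure ℝ) ∧
      ∀ x : ℝ, (x : ℂ) * (c₀ * ((x : ℂ) - (s : ℂ) * Complex.I)⁻¹) - c₀ =
        (s : ℂ) * Complex.I * (c₀ * ((x : ℂ) - (s : ℂ) * Complex.I)⁻¹)) ∧
    -- in particular the deficiency set is a one-dimensional subspace of `L²(ℝ)`
    (∃ g₀ : Lp ℂ 2 (volume : Measure ℝ), g₀ ≠ 0 ∧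
      {g : Lp ℂ 2 (volume : Measure ℝ) | ∃ c : ℂ,
          MemLp (fun x : ℝ => (x : ℂ) * g x - c) 2 (volume : Measure ℝ) ∧
          ∀ᵐ x : ℝ, (x : ℂ) * g x - c = (s : ℂ) * Complex.I * g x} =
        Set.range (fun a : ℂ => a • g₀)) := by
  have hz : ((s : ℂ) * Complex.I).im ≠ 0 := by rcases hs with rfl | rfl <;> simp
  exact ⟨Set.ext (mem_deficiencySet_iff hz),
    fun c₀ => ⟨memLp_two_ofReal_mul_mul_inv_sub_sub hz c₀, ofReal_mul_mul_inv_sub_sub hz c₀⟩,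
    cauchyKernelLp hz, cauchyKernelLp_ne_zero hz, deficiencySet_eq_range_smul hz⟩
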